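/- arXiv:1901.11323 — 4 statements merged into one kernel-verified Lean document; each statement's English description precedes it below -/
import Mathlib

section
/- Let c > 0 and η, τ ∈ ℝ with η² − τ² ≠ −4c², let ν ∈ ℝ³ be a unit vector, and let R_{η,τ} := −( i c (α·ν) + (1/2)(η I₄ + τ β) )⁻¹ · ( −i c (α·ν) + (1/2)(η I₄ + τ β) ). Then R_{η,τ} is an invertible matrix and R_{η,τ}⁻¹ = R_{−η,−τ}. -/
/-!
With `A = α·ν` and `B = β` one has `A² = B² = 1` and `AB = -BA`, so the factor
`P_{η,τ} = icA + ½(ηI + τB)` satisfies `P_{η,τ} (-icA + ½(ηI - τB)) = (c² + (η² - τ²)/4) I`,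
and likewise in the other order; hence `P_{η,τ}` is invertible. Since
`R_{η,τ} = P_{η,τ}⁻¹ P_{-η,-τ}`, its inverse is `P_{-η,-τ}⁻¹ P_{η,τ} = R_{-η,-τ}`.
-/

open Matrix

noncomputable section

/-- The Pauli matrices. -/
def pauli : Fin 3 → Matrix (Fin 2) (Fin 2) ℂ
  | 0 => !![0, 1; 1, 0]
  | 1 => !![0, -Complex.I; Complex.I, 0]
  | 2 => !![1, 0; 0, -1]

/-- The Dirac matrices α₁, α₂, α₃. -/
def diracAlpha (j : Fin 3) : Matrix (Fin 4) (Fin 4) ℂ :=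
  Matrix.reindex finSumFinEquiv finSumFinEquiv (Matrix.fromBlocks 0 (pauli j) (pauli j) 0)

/-- The Dirac matrix β. -/
def diracBeta : Matrix (Fin 4) (Fin 4) ℂ :=
  Matrix.reindex finSumFinEquiv finSumFinEquiv ((Matrix.fromBlocks 1 0 0 (-1) : Matrix (Fin 2 ⊕ Fin 2) (Fin 2 ⊕ Fin 2) ℂ))

/-- The matrix γ₅. -/
def gammaFive : Matrix (Fin 4) (Fin 4) ℂ :=
  Matrix.reindex finSumFinEquiv finSumFinEquiv ((Matrix.fromBlocks 0 1 1 0 : Matrix (Fin 2 ⊕ Fin 2) (Fin 2 ⊕ Fin 2) ℂ))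

/-- α·x for x ∈ ℝ³. -/
def alphaDot (x : EuclideanSpace ℝ (Fin 3)) : Matrix (Fin 4) (Fin 4) ℂ :=
  ∑ j : Fin 3, (x j : ℂ) • diracAlpha j

/-- The (η,τ)-jump condition. -/
def JumpCond (c η τ : ℝ) (ν : EuclideanSpace ℝ (Fin 3)) (u v : Fin 4 → ℂ) : Prop :=
  (Complex.I * (c : ℂ)) • ((alphaDot ν) *ᵥ (u - v)) +
    ((1 : ℂ) / 2) • ((((η : ℂ) • (1 : Matrix (Fin 4) (Fin 4) ℂ) + (τ : ℂ) • diracBeta)) *ᵥ (u + v)) = 0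

/-- The matrix R_{η,τ} relating the two boundary traces. -/
def Rmat (c η τ : ℝ) (ν : EuclideanSpace ℝ (Fin 3)) : Matrix (Fin 4) (Fin 4) ℂ :=
  -((((Complex.I * (c : ℂ)) • alphaDot ν
      + ((1 : ℂ) / 2) • ((η : ℂ) • (1 : Matrix (Fin 4) (Fin 4) ℂ) + (τ : ℂ) • diracBeta))⁻¹)
    * ((-(Complex.I * (c : ℂ))) • alphaDot ν
      + ((1 : ℂ) / 2) • ((η : ℂ) • (1 : Matrix (Fin 4) (Fin 4) ℂ) + (τ : ℂ) • diracBeta)))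

section AnticommutingInvolutions

variable {R M : Type*} [CommRing R] [Ring M] [Algebra R M] {a b : M}

theorem smul_add_smul_add_smul_mul_conj (ha : a * a = 1) (hb : b * b = 1)
    (hab : a * b = -(b * a)) (u e t : R) :
    (u • a + e • 1 + t • b) * (-u • a + e • 1 - t • b) = (e ^ 2 - u ^ 2 - t ^ 2) • (1 : M) := by
  simp only [add_mul, mul_add, mul_sub, smul_mul_assoc, mul_smul_comm,
    ha, hb, hab, mul_one, one_mul, smul_neg]
  module

theorem conj_mul_smul_add_smul_add_smul (ha : a * a = 1) (hb : b * b = 1)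
    (hab : a * b = -(b * a)) (u e t : R) :
    (-u • a + e • 1 - t • b) * (u • a + e • 1 + t • b) = (e ^ 2 - u ^ 2 - t ^ 2) • (1 : M) := by
  simp only [add_mul, mul_add, sub_mul, smul_mul_assoc, mul_smul_comm,
    ha, hb, hab, mul_one, one_mul, smul_neg]
  module

theorem isUnit_smul_add_smul_add_smul {K : Type*} [Field K] [Algebra K M] (ha : a * a = 1)
    (hb : b * b = 1) (hab : a * b = -(b * a)) {u e t : K} (hk : e ^ 2 - u ^ 2 - t ^ 2 ≠ 0) :
    IsUnit (u • a + e • 1 + t • b) := by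
  refine isUnit_iff_exists.2 ⟨(e ^ 2 - u ^ 2 - t ^ 2)⁻¹ • (-u • a + e • 1 - t • b), ?_, ?_⟩
  · rw [mul_smul_comm, smul_add_smul_add_smul_mul_conj ha hb hab, smul_smul, inv_mul_cancel₀ hk,
      one_smul]
  · rw [smul_mul_assoc, conj_mul_smul_add_smul_add_smul ha hb hab, smul_smul, inv_mul_cancel₀ hk,
      one_smul]

end AnticommutingInvolutions

def pauliDot (x : EuclideanSpace ℝ (Fin 3)) : Matrix (Fin 2) (Fin 2) ℂ :=
  ∑ j : Fin 3, (x j : ℂ) • pauli j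

theorem pauliDot_eq (x : EuclideanSpace ℝ (Fin 3)) :
    pauliDot x = !![(x 2 : ℂ), x 0 - Complex.I * x 1; x 0 + Complex.I * x 1, -(x 2 : ℂ)] := by
  ext i j
  fin_cases i <;> fin_cases j <;> simp [pauliDot, Fin.sum_univ_three, pauli] <;> ring

theorem pauliDot_mul_self (x : EuclideanSpace ℝ (Fin 3)) :
    pauliDot x * pauliDot x = ((‖x‖ ^ 2 : ℝ) : ℂ) • 1 := by
  rw [EuclideanSpace.real_norm_sq_eq, Fin.sum_univ_three, pauliDot_eq]
  ext i j
  fin_cases i <;> fin_cases j <;> simp <;> ring_nf <;> simp only [Complex.I_sq] <;> ring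

local notation "blockToFin4" => reindexAlgEquiv ℂ ℂ (finSumFinEquiv (m := 2) (n := 2))

theorem alphaDot_eq_fromBlocks (x : EuclideanSpace ℝ (Fin 3)) :
    alphaDot x = blockToFin4 (fromBlocks 0 (pauliDot x) (pauliDot x) 0) := by
  have hα : ∀ j, diracAlpha j = blockToFin4 (fromBlocks 0 (pauli j) (pauli j) 0) := fun _ => rfl
  simp only [alphaDot, pauliDot, hα, ← map_smul, ← map_sum]
  congr 1
  simp [Fin.sum_univ_three, fromBlocks_smul, fromBlocks_add]

theorem diracBeta_eq_fromBlocks : diracBeta = blockToFin4 (fromBlocks 1 0 0 (-1)) := rfl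

theorem alphaDot_mul_self (x : EuclideanSpace ℝ (Fin 3)) :
    alphaDot x * alphaDot x = ((‖x‖ ^ 2 : ℝ) : ℂ) • 1 := by
  rw [alphaDot_eq_fromBlocks, ← map_mul, fromBlocks_multiply, pauliDot_mul_self,
    ← map_one blockToFin4, ← map_smul, ← fromBlocks_one, fromBlocks_smul, smul_zero]
  simp

theorem diracBeta_mul_self : diracBeta * diracBeta = 1 := by
  rw [diracBeta_eq_fromBlocks, ← map_mul, fromBlocks_multiply]
  simp

theorem alphaDot_mul_diracBeta (x : EuclideanSpace ℝ (Fin 3)) :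
    alphaDot x * diracBeta = -(diracBeta * alphaDot x) := by
  rw [alphaDot_eq_fromBlocks, diracBeta_eq_fromBlocks, ← map_mul, ← map_mul, ← map_neg,
    fromBlocks_multiply, fromBlocks_multiply, fromBlocks_neg]
  simp

def diracFactor (c η τ : ℝ) (ν : EuclideanSpace ℝ (Fin 3)) : Matrix (Fin 4) (Fin 4) ℂ :=
  (Complex.I * (c : ℂ)) • alphaDot ν
    + ((1 : ℂ) / 2) • ((η : ℂ) • (1 : Matrix (Fin 4) (Fin 4) ℂ) + (τ : ℂ) • diracBeta)

theorem Rmat_eq_inv_mul (c η τ : ℝ) (ν : EuclideanSpace ℝ (Fin 3)) :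
    Rmat c η τ ν = (diracFactor c η τ ν)⁻¹ * diracFactor c (-η) (-τ) ν := by
  rw [Rmat, ← diracFactor, ← mul_neg]
  congr 1
  simp only [diracFactor]
  push_cast
  module

theorem isUnit_diracFactor {c η τ : ℝ} (h : η ^ 2 - τ ^ 2 ≠ -(4 * c ^ 2))
    {ν : EuclideanSpace ℝ (Fin 3)} (hν : ‖ν‖ = 1) : IsUnit (diracFactor c η τ ν) := by
  have hsplit : diracFactor c η τ ν = (Complex.I * c) • alphaDot ν
      + ((η : ℂ) / 2) • (1 : Matrix (Fin 4) (Fin 4) ℂ) + ((τ : ℂ) / 2) • diracBeta := by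
    simp only [diracFactor]
    module
  have hα : alphaDot ν * alphaDot ν = 1 := by simp [alphaDot_mul_self, hν]
  rw [hsplit]
  refine isUnit_smul_add_smul_add_smul hα diracBeta_mul_self (alphaDot_mul_diracBeta ν) ?_
  contrapose! h
  have hC : ((η ^ 2 - τ ^ 2 : ℝ) : ℂ) = ((-(4 * c ^ 2) : ℝ) : ℂ) := by
    push_cast
    linear_combination 4 * h + 4 * (c : ℂ) ^ 2 * Complex.I_sq
  exact_mod_cast hC

theorem Rmat_invertible_inv_eq_general (c η τ : ℝ)
    (h : η ^ 2 - τ ^ 2 ≠ -(4 * c ^ 2))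
    (ν : EuclideanSpace ℝ (Fin 3)) (hν : ‖ν‖ = 1) :
    IsUnit (Rmat c η τ ν) ∧ (Rmat c η τ ν)⁻¹ = Rmat c (-η) (-τ) ν := by
  have hP : IsUnit (diracFactor c η τ ν) := isUnit_diracFactor h hν
  have hQ : IsUnit (diracFactor c (-η) (-τ) ν) :=
    isUnit_diracFactor (by rwa [neg_sq, neg_sq]) hν
  rw [Rmat_eq_inv_mul, Rmat_eq_inv_mul, neg_neg, neg_neg]
  refine ⟨(isUnit_nonsing_inv_iff.2 hP).mul hQ, ?_⟩
  rw [Matrix.mul_inv_rev, nonsing_inv_nonsing_inv _ ((isUnit_iff_isUnit_det _).1 hP)]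

theorem Rmat_invertible_inv_eq (c η τ : ℝ) (hc : 0 < c)
    (h : η ^ 2 - τ ^ 2 ≠ -(4 * c ^ 2))
    (ν : EuclideanSpace ℝ (Fin 3)) (hν : ‖ν‖ = 1) :
    IsUnit (Rmat c η τ ν) ∧ (Rmat c η τ ν)⁻¹ = Rmat c (-η) (-τ) ν :=
  Rmat_invertible_inv_eq_general c η τ h ν hν

end
end

section
/- (MIT bag boundary conditions.) Let c > 0 and let ν ∈ ℝ³ be a unit vector. Then for all u, v ∈ ℂ⁴ the pair (u,v) satisfies the (0, 2c)-jump condition if and only if ( I₄ + i β (α·ν) ) u = 0 and ( I₄ − i β (α·ν) ) v = 0. -/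
open Matrix

noncomputable section

lemma diracBeta_eq : diracBeta = !![1,0,0,0; 0,1,0,0; 0,0,-1,0; 0,0,0,-1] := by
  ext i j
  fin_cases i <;> fin_cases j <;>
    norm_num [diracBeta, Matrix.fromBlocks, finSumFinEquiv, Fin.addCases, Fin.ext_iff,
      Fin.subNat, Fin.castLT, Matrix.vecHead, Matrix.vecTail]

lemma diracAlpha0_eq : diracAlpha 0 = !![0,0,0,1; 0,0,1,0; 0,1,0,0; 1,0,0,0] := by
  ext i j
  fin_cases i <;> fin_cases j <;>
    norm_num [diracAlpha, pauli, Matrix.fromBlocks, finSumFinEquiv, Fin.addCases, Fin.ext_iff,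
      Fin.subNat, Fin.castLT, Matrix.vecHead, Matrix.vecTail]

lemma diracAlpha1_eq : diracAlpha 1 =
    !![0,0,0,-Complex.I; 0,0,Complex.I,0; 0,-Complex.I,0,0; Complex.I,0,0,0] := by
  ext i j
  fin_cases i <;> fin_cases j <;>
    norm_num [diracAlpha, pauli, Matrix.fromBlocks, finSumFinEquiv, Fin.addCases, Fin.ext_iff,
      Fin.subNat, Fin.castLT, Matrix.vecHead, Matrix.vecTail]

lemma diracAlpha2_eq : diracAlpha 2 = !![0,0,1,0; 0,0,0,-1; 1,0,0,0; 0,-1,0,0] := by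
  ext i j
  fin_cases i <;> fin_cases j <;>
    norm_num [diracAlpha, pauli, Matrix.fromBlocks, finSumFinEquiv, Fin.addCases, Fin.ext_iff,
      Fin.subNat, Fin.castLT, Matrix.vecHead, Matrix.vecTail]

lemma alphaDot_eq (ν : EuclideanSpace ℝ (Fin 3)) : alphaDot ν =
    !![0, 0, (ν 2 : ℂ), (ν 0 : ℂ) - Complex.I * (ν 1 : ℂ);
       0, 0, (ν 0 : ℂ) + Complex.I * (ν 1 : ℂ), -(ν 2 : ℂ);
       (ν 2 : ℂ), (ν 0 : ℂ) - Complex.I * (ν 1 : ℂ), 0, 0;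
       (ν 0 : ℂ) + Complex.I * (ν 1 : ℂ), -(ν 2 : ℂ), 0, 0] := by
  rw [alphaDot, Fin.sum_univ_three, diracAlpha0_eq, diracAlpha1_eq, diracAlpha2_eq]
  ext i j
  fin_cases i <;> fin_cases j <;>
    simp [Matrix.vecHead, Matrix.vecTail] <;> ring

lemma nu_sq_sum (ν : EuclideanSpace ℝ (Fin 3)) (hν : ‖ν‖ = 1) :
    ((ν 0 : ℂ))^2 + ((ν 1 : ℂ))^2 + ((ν 2 : ℂ))^2 = 1 := by
  have h : (ν 0)^2 + (ν 1)^2 + (ν 2)^2 = 1 := by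
    have := hν
    rw [EuclideanSpace.norm_eq] at this
    have h2 : ∑ i : Fin 3, ‖ν i‖ ^ 2 = 1 := by
      have hnn : 0 ≤ ∑ i : Fin 3, ‖ν i‖ ^ 2 :=
        Finset.sum_nonneg fun i _ => sq_nonneg _
      nlinarith [Real.sq_sqrt hnn, this]
    simpa [Fin.sum_univ_three, Real.norm_eq_abs, sq_abs] using h2
  have := congrArg (fun x : ℝ => (x : ℂ)) h
  push_cast at this
  linear_combination this

lemma BA_sq (ν : EuclideanSpace ℝ (Fin 3)) (hν : ‖ν‖ = 1) :
    (diracBeta * alphaDot ν) * (diracBeta * alphaDot ν) = -1 := by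
  have hs := nu_sq_sum ν hν
  rw [diracBeta_eq, alphaDot_eq]
  ext i j
  fin_cases i <;> fin_cases j <;>
    simp [Matrix.mul_apply, Fin.sum_univ_four, Matrix.neg_apply, Matrix.one_apply,
      Matrix.vecHead, Matrix.vecTail] <;>
    (try ring) <;>
    (try linear_combination (-1 : ℂ) * hs + ((ν 1 : ℂ))^2 * Complex.I_sq)

theorem jump_condition_MIT_bag (c : ℝ) (hc : 0 < c)
    (ν : EuclideanSpace ℝ (Fin 3)) (hν : ‖ν‖ = 1) :
    ∀ u v : Fin 4 → ℂ, JumpCond c 0 (2 * c) ν u v ↔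
      ((((1 : Matrix (Fin 4) (Fin 4) ℂ) + Complex.I • (diracBeta * alphaDot ν)) *ᵥ u = 0) ∧
       (((1 : Matrix (Fin 4) (Fin 4) ℂ) - Complex.I • (diracBeta * alphaDot ν)) *ᵥ v = 0)) := by
  intro u v
  have hc' : (c : ℂ) ≠ 0 := by exact_mod_cast hc.ne'
  have hB2 : diracBeta * diracBeta = 1 := by
    rw [diracBeta_eq]
    ext i j
    fin_cases i <;> fin_cases j <;>
      simp [Matrix.mul_apply, Fin.sum_univ_four, Matrix.one_apply, Matrix.vecHead,
        Matrix.vecTail]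
  set K : Matrix (Fin 4) (Fin 4) ℂ := Complex.I • (diracBeta * alphaDot ν) with hKdef
  have hK2 : K * K = 1 := by
    rw [hKdef, Matrix.smul_mul, Matrix.mul_smul, smul_smul, BA_sq ν hν]
    simp [Complex.I_mul_I]
  have hMN : ((1 : Matrix (Fin 4) (Fin 4) ℂ) + K) * (1 - K) = 0 := by
    rw [add_mul, one_mul, mul_sub, mul_one, hK2]
    abel
  have hNM : ((1 : Matrix (Fin 4) (Fin 4) ℂ) - K) * (1 + K) = 0 := by
    rw [sub_mul, one_mul, mul_add, mul_one, hK2]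
    abel
  have hMM : ((1 : Matrix (Fin 4) (Fin 4) ℂ) + K) * (1 + K) = (1 + K) + (1 + K) := by
    rw [add_mul, one_mul, mul_add, mul_one, hK2]
    abel
  have hNN : ((1 : Matrix (Fin 4) (Fin 4) ℂ) - K) * (1 - K) = (1 - K) + (1 - K) := by
    rw [sub_mul, one_mul, mul_sub, mul_one, hK2]
    abel
  have half : ∀ x : Fin 4 → ℂ, x + x = 0 → x = 0 := by
    intro x hx
    have h2 : (2 : ℂ) • x = 0 := by rw [two_smul]; exact hx
    simpa using (smul_eq_zero.mp h2).resolve_left (by norm_num)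
  have step1 : JumpCond c 0 (2 * c) ν u v ↔
      ((1 : Matrix (Fin 4) (Fin 4) ℂ) + K) *ᵥ u + ((1 : Matrix (Fin 4) (Fin 4) ℂ) - K) *ᵥ v
        = 0 := by
    unfold JumpCond
    have e1 : ((0 : ℝ) : ℂ) • (1 : Matrix (Fin 4) (Fin 4) ℂ) + ((2 * c : ℝ) : ℂ) • diracBeta
        = ((2 * c : ℝ) : ℂ) • diracBeta := by
      norm_num
    rw [e1]
    have e2 : ((1 : ℂ) / 2) • ((((2 * c : ℝ) : ℂ) • diracBeta) *ᵥ (u + v))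
        = (c : ℂ) • (diracBeta *ᵥ (u + v)) := by
      rw [Matrix.smul_mulVec, smul_smul]
      congr 1
      push_cast
      ring
    rw [e2]
    have e3 : (Complex.I * (c : ℂ)) • (alphaDot ν *ᵥ (u - v))
        = (c : ℂ) • (Complex.I • (alphaDot ν *ᵥ (u - v))) := by
      rw [smul_smul, mul_comm]
    rw [e3, ← smul_add, smul_eq_zero, or_iff_right hc']
    have key : Complex.I • (alphaDot ν *ᵥ (u - v)) + diracBeta *ᵥ (u + v) = 0 ↔
        diracBeta *ᵥ (Complex.I • (alphaDot ν *ᵥ (u - v)) + diracBeta *ᵥ (u + v)) = 0 := by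
      constructor
      · intro h; rw [h, Matrix.mulVec_zero]
      · intro h
        have := congrArg (fun x => diracBeta *ᵥ x) h
        simpa [Matrix.mulVec_mulVec, hB2, ← Matrix.mulVec_add, Matrix.mulVec_smul] using this
    rw [key]
    have eq4 : diracBeta *ᵥ (Complex.I • (alphaDot ν *ᵥ (u - v)) + diracBeta *ᵥ (u + v))
        = ((1 : Matrix (Fin 4) (Fin 4) ℂ) + K) *ᵥ u
          + ((1 : Matrix (Fin 4) (Fin 4) ℂ) - K) *ᵥ v := by
      simp only [Matrix.mulVec_add, Matrix.mulVec_smul, Matrix.mulVec_mulVec, hB2,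
        Matrix.one_mulVec, hKdef, Matrix.add_mulVec, Matrix.sub_mulVec,
        Matrix.smul_mulVec, Matrix.mulVec_sub]
      module
    rw [eq4]
  rw [step1, hKdef]
  constructor
  · intro h
    rw [← hKdef]
    have h1 : (((1 : Matrix (Fin 4) (Fin 4) ℂ) + K) * (1 + K)) *ᵥ u
        + (((1 : Matrix (Fin 4) (Fin 4) ℂ) + K) * (1 - K)) *ᵥ v = 0 := by
      simpa only [Matrix.mulVec_add, Matrix.mulVec_mulVec, Matrix.mulVec_zero] using
        congrArg (fun x => ((1 : Matrix (Fin 4) (Fin 4) ℂ) + K) *ᵥ x) h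
    rw [hMM, hMN, Matrix.zero_mulVec, add_zero, Matrix.add_mulVec] at h1
    have hu : ((1 : Matrix (Fin 4) (Fin 4) ℂ) + K) *ᵥ u = 0 := half _ h1
    have h2 : (((1 : Matrix (Fin 4) (Fin 4) ℂ) - K) * (1 + K)) *ᵥ u
        + (((1 : Matrix (Fin 4) (Fin 4) ℂ) - K) * (1 - K)) *ᵥ v = 0 := by
      simpa only [Matrix.mulVec_add, Matrix.mulVec_mulVec, Matrix.mulVec_zero] using
        congrArg (fun x => ((1 : Matrix (Fin 4) (Fin 4) ℂ) - K) *ᵥ x) h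
    rw [hNM, hNN, Matrix.zero_mulVec, zero_add, Matrix.add_mulVec] at h2
    have hv : ((1 : Matrix (Fin 4) (Fin 4) ℂ) - K) *ᵥ v = 0 := half _ h2
    exact ⟨hu, hv⟩
  · rintro ⟨hu, hv⟩
    rw [← hKdef] at hu hv ⊢
    rw [hu, hv, add_zero]

end
end

section
/- (Algebraic core of Lemma 4.1: symmetry of A_{η,τ}.) Let c > 0, η, τ ∈ ℝ, and let ν ∈ ℝ³ be a unit vector. Suppose u₊, u₋, v₊, v₋ ∈ ℂ⁴ are such that both pairs (u₊, u₋) and (v₊, v₋) satisfy the (η,τ)-jump condition. Then ⟨(α·ν) u₊, v₊⟩ = ⟨(α·ν) u₋, v₋⟩, where ⟨a,b⟩ := Σₖ aₖ · conj(bₖ) is the standard inner product on ℂ⁴. -/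
open Matrix

noncomputable section

/-- The standard inner product on ℂ⁴, ⟨a,b⟩ = Σₖ aₖ conj(bₖ). -/
def innC (a b : Fin 4 → ℂ) : ℂ := ∑ k : Fin 4, a k * (starRingEnd ℂ) (b k)


lemma pauli_herm (j : Fin 3) : (pauli j)ᴴ = pauli j := by
  fin_cases j <;> ext i k <;> fin_cases i <;> fin_cases k <;>
    simp [pauli, Matrix.conjTranspose_apply]

lemma diracAlpha_herm (j : Fin 3) : (diracAlpha j)ᴴ = diracAlpha j := by
  unfold diracAlpha
  simp only [Matrix.reindex_apply, Matrix.conjTranspose_submatrix,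
    Matrix.fromBlocks_conjTranspose, Matrix.conjTranspose_zero, pauli_herm]

lemma diracBeta_herm : diracBetaᴴ = diracBeta := by
  unfold diracBeta
  simp only [Matrix.reindex_apply, Matrix.conjTranspose_submatrix,
    Matrix.fromBlocks_conjTranspose, Matrix.conjTranspose_zero,
    Matrix.conjTranspose_one, Matrix.conjTranspose_neg]

lemma innC_mulVec (M : Matrix (Fin 4) (Fin 4) ℂ) (a b : Fin 4 → ℂ) :
    innC (M *ᵥ a) b = innC a (Mᴴ *ᵥ b) := by
  simp only [innC, Matrix.mulVec, dotProduct, Matrix.conjTranspose_apply,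
    Finset.sum_mul, Finset.mul_sum]
  rw [Finset.sum_comm]
  apply Finset.sum_congr rfl; intro k _
  rw [map_sum, Finset.mul_sum]
  apply Finset.sum_congr rfl; intro j _
  simp only [_root_.map_mul, Complex.star_def, Complex.conj_conj]
  ring

lemma innC_add_left (a b x : Fin 4 → ℂ) : innC (a + b) x = innC a x + innC b x := by
  simp [innC, add_mul, Finset.sum_add_distrib]

lemma innC_sub_left (a b x : Fin 4 → ℂ) : innC (a - b) x = innC a x - innC b x := by
  simp [innC, sub_mul, Finset.sum_sub_distrib]

lemma innC_add_right (x a b : Fin 4 → ℂ) : innC x (a + b) = innC x a + innC x b := by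
  simp [innC, mul_add, Finset.sum_add_distrib]

lemma innC_sub_right (x a b : Fin 4 → ℂ) : innC x (a - b) = innC x a - innC x b := by
  simp [innC, mul_sub, Finset.sum_sub_distrib]

lemma innC_smul_left (z : ℂ) (a b : Fin 4 → ℂ) : innC (z • a) b = z * innC a b := by
  simp [innC, Finset.mul_sum, mul_assoc]

lemma innC_smul_right (z : ℂ) (a b : Fin 4 → ℂ) :
    innC a (z • b) = (starRingEnd ℂ) z * innC a b := by
  simp only [innC, Pi.smul_apply, smul_eq_mul, _root_.map_mul, Finset.mul_sum]
  apply Finset.sum_congr rfl; intro k _; ring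

lemma alphaDot_herm (x : EuclideanSpace ℝ (Fin 3)) : (alphaDot x)ᴴ = alphaDot x := by
  unfold alphaDot
  rw [Matrix.conjTranspose_sum]
  apply Finset.sum_congr rfl; intro j _
  rw [Matrix.conjTranspose_smul, diracAlpha_herm]
  simp [Complex.star_def, Complex.conj_ofReal]

lemma mass_herm (η τ : ℝ) :
    ((η : ℂ) • (1 : Matrix (Fin 4) (Fin 4) ℂ) + (τ : ℂ) • diracBeta)ᴴ =
      (η : ℂ) • (1 : Matrix (Fin 4) (Fin 4) ℂ) + (τ : ℂ) • diracBeta := by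
  rw [Matrix.conjTranspose_add, Matrix.conjTranspose_smul, Matrix.conjTranspose_smul,
    Matrix.conjTranspose_one, diracBeta_herm]
  simp [Complex.star_def, Complex.conj_ofReal]

theorem jump_condition_boundary_term_vanishes (c η τ : ℝ) (hc : 0 < c)
    (ν : EuclideanSpace ℝ (Fin 3)) (hν : ‖ν‖ = 1)
    (up um vp vm : Fin 4 → ℂ)
    (hu : JumpCond c η τ ν up um) (hv : JumpCond c η τ ν vp vm) :
    innC ((alphaDot ν) *ᵥ up) vp = innC ((alphaDot ν) *ᵥ um) vm := by
  set A := alphaDot ν with hAdef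
  set M := (η : ℂ) • (1 : Matrix (Fin 4) (Fin 4) ℂ) + (τ : ℂ) • diracBeta with hMdef
  have hA : Aᴴ = A := alphaDot_herm ν
  have hMh : Mᴴ = M := mass_herm η τ
  have hu' : (Complex.I * (c : ℂ)) • (A *ᵥ (up - um))
      = -(((1 : ℂ) / 2) • (M *ᵥ (up + um))) :=
    eq_neg_of_add_eq_zero_left hu
  have hv' : (Complex.I * (c : ℂ)) • (A *ᵥ (vp - vm))
      = -(((1 : ℂ) / 2) • (M *ᵥ (vp + vm))) :=
    eq_neg_of_add_eq_zero_left hv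
  -- transfer lemma
  have hAt : ∀ x y, innC (A *ᵥ x) y = innC x (A *ᵥ y) := by
    intro x y; rw [innC_mulVec, hA]
  have hMt : ∀ x y, innC (M *ᵥ x) y = innC x (M *ᵥ y) := by
    intro x y; rw [innC_mulVec, hMh]
  set S := innC (M *ᵥ (up + um)) (vp + vm) with hS
  have E1 : (Complex.I * (c : ℂ)) * innC (A *ᵥ (up - um)) (vp + vm) = -(1/2) * S := by
    rw [← innC_smul_left, hu', hS]
    have : -(((1 : ℂ) / 2) • (M *ᵥ (up + um))) = (-(1/2) : ℂ) • (M *ᵥ (up + um)) := by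
      rw [neg_smul]
    rw [this, innC_smul_left]
  have E2 : (Complex.I * (c : ℂ)) * innC (A *ᵥ (up + um)) (vp - vm) = (1/2) * S := by
    rw [hAt]
    have h1 : innC (up + um) ((Complex.I * (c : ℂ)) • (A *ᵥ (vp - vm)))
        = innC (up + um) (-(((1 : ℂ) / 2) • (M *ᵥ (vp + vm)))) := by rw [hv']
    rw [innC_smul_right] at h1
    have h2 : (starRingEnd ℂ) (Complex.I * (c : ℂ)) = -(Complex.I * (c : ℂ)) := by
      simp [Complex.conj_ofReal]
    rw [h2] at h1
    have h3 : -(((1 : ℂ) / 2) • (M *ᵥ (vp + vm))) = ((-(1/2) : ℂ)) • (M *ᵥ (vp + vm)) := by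
      rw [neg_smul]
    rw [h3, innC_smul_right] at h1
    have h4 : (starRingEnd ℂ) (-(1/2) : ℂ) = -(1/2) := by
      rw [show (-(1/2) : ℂ) = ((-(1/2) : ℝ) : ℂ) by norm_num, Complex.conj_ofReal]
    rw [h4, ← hMt] at h1
    have : (Complex.I * (c : ℂ)) * innC (up + um) (A *ᵥ (vp - vm)) = (1/2) * S := by
      rw [hS]; linear_combination -h1
    exact this
  have expand : innC (A *ᵥ (up - um)) (vp + vm) + innC (A *ᵥ (up + um)) (vp - vm)
      = 2 * (innC (A *ᵥ up) vp - innC (A *ᵥ um) vm) := by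
    rw [Matrix.mulVec_sub, Matrix.mulVec_add, innC_sub_left, innC_add_left,
      innC_add_right, innC_add_right, innC_sub_right, innC_sub_right]
    ring
  have key : (Complex.I * (c : ℂ)) * (2 * (innC (A *ᵥ up) vp - innC (A *ᵥ um) vm)) = 0 := by
    rw [← expand, mul_add, E1, E2]; ring
  have hne : (Complex.I * (c : ℂ)) ≠ 0 := by
    simp [Complex.I_ne_zero, Complex.ofReal_ne_zero, ne_of_gt hc]
  have := mul_eq_zero.mp key
  rcases this with h | h
  · exact absurd h hne
  · have := mul_eq_zero.mp h
    rcases this with h' | h'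
    · norm_num at h'
    · exact sub_eq_zero.mp h'

end
end

section
/- (Abstract core of Lemma 3.2(iii): bounded invertibility of I + (η + τβ)𝒞_λ.) Let H be a complex Hilbert space, let C and B be bounded linear operators on H with B ∘ B = id, let η, τ ∈ ℝ and c > 0 with η² − τ² ≠ 4c², and set M := η·C + τ·(B ∘ C). Assume that the operators C ∘ B + B ∘ C and C ∘ C − (1/(4c²))·id are compact, and that both id + M and id − M are injective. Then id + M is bijective, and hence has a bounded everywhere defined inverse. -/
/-!
With `B² = 1` one computes `M² = (η² - τ²) C² + (ητ + τ² B)(CB + BC)C`, so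
`1 - M² = (1 - (η² - τ²)/(4c²)) • 1 + compact`. By the Fredholm alternative the injective operator
`(1 - M)(1 + M) = 1 - M²` is invertible, and since its two factors commute, so is `1 + M`.
-/

open Module End

theorem mul_self_smul_add_smul_mul {R A : Type*} [CommRing R] [Ring A] [Algebra R A]
    {B C : A} (hB : B * B = 1) (a b : R) :
    (a • C + b • (B * C)) * (a • C + b • (B * C)) =
      (a ^ 2 - b ^ 2) • (C * C) + (a * b) • ((C * B + B * C) * C) +
        b ^ 2 • (B * ((C * B + B * C) * C)) := by
  have hBB : ∀ x : A, B * (B * x) = x := fun x => by rw [← mul_assoc, hB, one_mul]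
  simp only [mul_add, add_mul, smul_mul_assoc, mul_smul_comm, mul_assoc, hBB]
  module

namespace ContinuousLinearMap

variable {𝕜 X : Type*} [NontriviallyNormedField 𝕜] [NormedAddCommGroup X] [NormedSpace 𝕜 X]

theorem isUnit_of_injective_of_isCompactOperator_sub_smul
    [CompleteSpace X] {T : X →L[𝕜] X} {μ : 𝕜} (hμ : μ ≠ 0)
    (hK : IsCompactOperator ⇑(T - μ • 1)) (hT : Function.Injective ⇑T) : IsUnit T := by
  have hnot : ¬ HasEigenvalue ((T - μ • 1 : X →L[𝕜] X) : End 𝕜 X) (-μ) := by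
    have : ((T - μ • 1 : X →L[𝕜] X) : End 𝕜 X) - (-μ) • 1 = T := by ext; simp
    rw [hasEigenvalue_iff, eigenspace_def, this, not_ne_iff, LinearMap.ker_eq_bot]
    exact hT
  have := (hK.hasEigenvalue_or_mem_resolventSet (neg_ne_zero.2 hμ)).resolve_left hnot
  rwa [spectrum.mem_resolventSet_iff, Algebra.algebraMap_eq_smul_one,
    show -μ • 1 - (T - μ • 1) = -T by module, IsUnit.neg_iff] at this

theorem isUnit_one_add_of_isCompactOperator_mul_self_sub_smul
    [CompleteSpace X] {M : X →L[𝕜] X} {s : 𝕜} (hs : s ≠ 1)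
    (hM : IsCompactOperator ⇑(M * M - s • 1))
    (hadd : Function.Injective ⇑(1 + M)) (hsub : Function.Injective ⇑(1 - M)) :
    IsUnit (1 + M) := by
  have hfactor : (1 - M) * (1 + M) = 1 - M * M := by noncomm_ring
  have hunit : IsUnit ((1 - M) * (1 + M)) := by
    refine isUnit_of_injective_of_isCompactOperator_sub_smul (sub_ne_zero.2 hs.symm) ?_
      (hsub.comp hadd)
    rw [hfactor, show 1 - M * M - (1 - s) • 1 = -(M * M - s • 1) by module]
    exact hM.neg
  have hcomm : Commute (1 - M) (1 + M) :=
    (Commute.one_right _).add_right ((Commute.one_left M).sub_left (Commute.refl M))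
  exact (hcomm.isUnit_mul_iff.1 hunit).2

theorem isCompactOperator_mul_self_sub_smul {B C : X →L[𝕜] X} (hB : B * B = 1)
    (hCB : IsCompactOperator ⇑(C * B + B * C)) {κ : 𝕜} (hC : IsCompactOperator ⇑(C * C - κ • 1))
    (a b : 𝕜) :
    IsCompactOperator
      ⇑((a • C + b • (B * C)) * (a • C + b • (B * C)) - ((a ^ 2 - b ^ 2) * κ) • 1) := by
  have hdecomp : (a • C + b • (B * C)) * (a • C + b • (B * C)) - ((a ^ 2 - b ^ 2) * κ) • 1 =
      (a ^ 2 - b ^ 2) • (C * C - κ • 1) + (a * b) • ((C * B + B * C) * C) +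
        b ^ 2 • (B * ((C * B + B * C) * C)) := by
    rw [mul_self_smul_add_smul_mul hB]
    module
  have hCBC : IsCompactOperator ⇑((C * B + B * C) * C) := hCB.comp_clm C
  rw [hdecomp]
  simpa only [FunLike.coe_add, FunLike.coe_smul, FunLike.coe_mul_eq_comp] using
    ((hC.smul _).add (hCBC.smul _)).add ((hCBC.clm_comp B).smul _)

end ContinuousLinearMap

theorem one_add_M_bijective_general (H : Type*) [NormedAddCommGroup H]
    [InnerProductSpace ℂ H] [CompleteSpace H]
    (C B : H →L[ℂ] H) (hB : B * B = 1) (η τ c : ℝ)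
    (hcrit : η ^ 2 - τ ^ 2 ≠ 4 * c ^ 2)
    (hcmp1 : IsCompactOperator ⇑(C * B + B * C))
    (hcmp2 : IsCompactOperator
      ⇑(C * C - ((1 : ℂ) / (4 * (c : ℂ) ^ 2)) • (1 : H →L[ℂ] H)))
    (hinj1 : Function.Injective ⇑(1 + ((η : ℂ) • C + (τ : ℂ) • (B * C))))
    (hinj2 : Function.Injective ⇑(1 - ((η : ℂ) • C + (τ : ℂ) • (B * C)))) :
    Function.Bijective ⇑(1 + ((η : ℂ) • C + (τ : ℂ) • (B * C))) ∧
    ∃ N : H →L[ℂ] H,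
      (1 + ((η : ℂ) • C + (τ : ℂ) • (B * C))) * N = 1 ∧
      N * (1 + ((η : ℂ) • C + (τ : ℂ) • (B * C))) = 1 := by
  have hs : ((η : ℂ) ^ 2 - (τ : ℂ) ^ 2) * (1 / (4 * (c : ℂ) ^ 2)) ≠ 1 := by
    intro h
    have hc : 4 * (c : ℂ) ^ 2 ≠ 0 := by
      -- at `c = 0` the scalar is `0` because `1 / 0 = 0`
      rintro hc
      simp [hc] at h
    rw [mul_one_div, div_eq_one_iff_eq hc] at h
    exact hcrit (by exact_mod_cast h)
  have hunit := ContinuousLinearMap.isUnit_one_add_of_isCompactOperator_mul_self_sub_smul hs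
    (ContinuousLinearMap.isCompactOperator_mul_self_sub_smul hB hcmp1 hcmp2 _ _) hinj1 hinj2
  exact ⟨ContinuousLinearMap.isUnit_iff_bijective.1 hunit,
    ↑hunit.unit⁻¹, hunit.mul_val_inv, hunit.val_inv_mul⟩

theorem one_add_M_bijective (H : Type*) [NormedAddCommGroup H]
    [InnerProductSpace ℂ H] [CompleteSpace H]
    (C B : H →L[ℂ] H) (hB : B * B = 1) (η τ c : ℝ) (hc : 0 < c)
    (hcrit : η ^ 2 - τ ^ 2 ≠ 4 * c ^ 2)
    (hcmp1 : IsCompactOperator ⇑(C * B + B * C))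
    (hcmp2 : IsCompactOperator
      ⇑(C * C - ((1 : ℂ) / (4 * (c : ℂ) ^ 2)) • (1 : H →L[ℂ] H)))
    (hinj1 : Function.Injective ⇑(1 + ((η : ℂ) • C + (τ : ℂ) • (B * C))))
    (hinj2 : Function.Injective ⇑(1 - ((η : ℂ) • C + (τ : ℂ) • (B * C)))) :
    Function.Bijective ⇑(1 + ((η : ℂ) • C + (τ : ℂ) • (B * C))) ∧
    ∃ N : H →L[ℂ] H,
      (1 + ((η : ℂ) • C + (τ : ℂ) • (B * C))) * N = 1 ∧
      N * (1 + ((η : ℂ) • C + (τ : ℂ) • (B * C))) = 1 :=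
  one_add_M_bijective_general H C B hB η τ c hcrit hcmp1 hcmp2 hinj1 hinj2
end
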